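/- arXiv:1510.00896 — 3 statements merged into one kernel-verified Lean document; each statement's English description precedes it below -/
import Mathlib

section
/- Let λ > 0, η > 0 and t > 0. Then for every ξ ∈ ℝ, |t ξ²|^λ e^{η(|ξ| − ξ²) t} ≤ C_λ (t^λ + η^{−λ}) e^{(η/8)(t + t^{1/2} √(t + 16λ/η))}, where C_λ is a constant depending only on λ. -/
lemma aux_rpow {lam u : ℝ} (hlam : 0 < lam) (hu : 0 ≤ u) :
    u ^ lam ≤ (2 * lam) ^ lam * Real.exp (u / 2) := by
  have hl2 : 0 < 2 * lam := by linarith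
  have h2 : u / (2 * lam) ≤ Real.exp (u / (2 * lam)) := by
    have := Real.add_one_le_exp (u / (2 * lam)); linarith
  have h1 : u ≤ 2 * lam * Real.exp (u / (2 * lam)) := by
    calc u = 2 * lam * (u / (2 * lam)) := by field_simp
    _ ≤ 2 * lam * Real.exp (u / (2 * lam)) := by
        exact mul_le_mul_of_nonneg_left h2 hl2.le
  calc u ^ lam ≤ (2 * lam * Real.exp (u / (2 * lam))) ^ lam :=
        Real.rpow_le_rpow hu h1 hlam.le
  _ = (2 * lam) ^ lam * Real.exp (u / (2 * lam)) ^ lam :=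
        Real.mul_rpow hl2.le (Real.exp_pos _).le
  _ = (2 * lam) ^ lam * Real.exp (u / 2) := by
        rw [← Real.exp_mul]
        congr 1
        field_simp

/-- For λ > 0, η > 0, t > 0 and every ξ ∈ ℝ,
|t ξ²|^λ e^{η(|ξ| − ξ²) t} ≤ C_λ (t^λ + η^{−λ}) e^{(η/8)(t + t^{1/2} √(t + 16λ/η))}. -/
theorem stmt0 (lam : ℝ) (hlam : 0 < lam) :
    ∃ C : ℝ, 0 < C ∧ ∀ (η t ξ : ℝ), 0 < η → 0 < t →
      |t * ξ ^ 2| ^ lam * Real.exp (η * (|ξ| - ξ ^ 2) * t) ≤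
        C * (t ^ lam + η ^ (-lam)) *
          Real.exp (η / 8 * (t + Real.sqrt t * Real.sqrt (t + 16 * lam / η))) := by
  refine ⟨(4 : ℝ) ^ lam + (2 * lam) ^ lam, by positivity, ?_⟩
  intro η t ξ hη ht
  set E := η / 8 * (t + Real.sqrt t * Real.sqrt (t + 16 * lam / η)) with hEdef
  have hE0 : 0 ≤ E := by
    have := Real.sqrt_nonneg t
    have := Real.sqrt_nonneg (t + 16 * lam / η)
    positivity
  have hEge : η * t / 4 ≤ E := by
    have hs : Real.sqrt t ≤ Real.sqrt (t + 16 * lam / η) := by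
      apply Real.sqrt_le_sqrt
      have : 0 ≤ 16 * lam / η := by positivity
      linarith
    have hss : t ≤ Real.sqrt t * Real.sqrt (t + 16 * lam / η) := by
      calc t = Real.sqrt t * Real.sqrt t := (Real.mul_self_sqrt ht.le).symm
      _ ≤ Real.sqrt t * Real.sqrt (t + 16 * lam / η) :=
          mul_le_mul_of_nonneg_left hs (Real.sqrt_nonneg t)
    rw [hEdef]
    nlinarith
  have habs : |t * ξ ^ 2| = t * ξ ^ 2 := abs_of_nonneg (by positivity)
  have htlam : (0:ℝ) ≤ t ^ lam := Real.rpow_nonneg ht.le lam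
  have hetalam : (0:ℝ) ≤ η ^ (-lam) := Real.rpow_nonneg hη.le _
  have hsq : |ξ| ^ 2 = ξ ^ 2 := sq_abs ξ
  rcases le_or_gt (|ξ|) 2 with hx | hx
  · -- |ξ| ≤ 2
    have h1 : |t * ξ ^ 2| ^ lam ≤ (4:ℝ) ^ lam * t ^ lam := by
      rw [habs]
      have h4 : ξ ^ 2 ≤ 4 := by nlinarith [abs_nonneg ξ, hsq]
      have hle : t * ξ ^ 2 ≤ 4 * t := by
        nlinarith [mul_nonneg ht.le (by linarith : (0:ℝ) ≤ 4 - ξ ^ 2)]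
      calc (t * ξ ^ 2) ^ lam ≤ (4 * t) ^ lam :=
            Real.rpow_le_rpow (by positivity) hle hlam.le
      _ = (4:ℝ) ^ lam * t ^ lam := Real.mul_rpow (by norm_num) ht.le
    have h2 : Real.exp (η * (|ξ| - ξ ^ 2) * t) ≤ Real.exp E := by
      apply Real.exp_le_exp.mpr
      have : |ξ| - ξ ^ 2 ≤ 1 / 4 := by nlinarith [sq_nonneg (|ξ| - 1/2)]
      calc η * (|ξ| - ξ ^ 2) * t ≤ η * (1/4) * t := by
            nlinarith [mul_nonneg (mul_nonneg hη.le ht.le) (by linarith : (0:ℝ) ≤ 1/4 - (|ξ| - ξ ^ 2))]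
      _ = η * t / 4 := by ring
      _ ≤ E := hEge
    calc |t * ξ ^ 2| ^ lam * Real.exp (η * (|ξ| - ξ ^ 2) * t)
        ≤ ((4:ℝ) ^ lam * t ^ lam) * Real.exp E := by
          apply mul_le_mul h1 h2 (Real.exp_pos _).le (by positivity)
    _ ≤ ((4:ℝ) ^ lam + (2 * lam) ^ lam) * (t ^ lam + η ^ (-lam)) * Real.exp E := by
          have h4 : (0:ℝ) ≤ (4:ℝ) ^ lam := by positivity
          have h2l : (0:ℝ) ≤ (2 * lam) ^ lam := by positivity
          have : (4:ℝ) ^ lam * t ^ lam ≤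
              ((4:ℝ) ^ lam + (2 * lam) ^ lam) * (t ^ lam + η ^ (-lam)) := by nlinarith
          exact mul_le_mul_of_nonneg_right this (Real.exp_pos _).le
  · -- |ξ| > 2
    have hxi2 : (0:ℝ) < ξ ^ 2 := by nlinarith [sq_abs ξ]
    set u := η * t * ξ ^ 2 with hudef
    have hu : 0 < u := by positivity
    have h2 : Real.exp (η * (|ξ| - ξ ^ 2) * t) ≤ Real.exp (-(u / 2)) := by
      apply Real.exp_le_exp.mpr
      have hxx : |ξ| ≤ ξ ^ 2 / 2 := by nlinarith [sq_abs ξ]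
      rw [hudef]; nlinarith
    have h1 : |t * ξ ^ 2| ^ lam = η ^ (-lam) * u ^ lam := by
      rw [habs, Real.rpow_neg hη.le]
      have : t * ξ ^ 2 = u / η := by rw [hudef]; field_simp
      rw [this, Real.div_rpow hu.le hη.le]
      ring
    have key : u ^ lam * Real.exp (-(u / 2)) ≤ (2 * lam) ^ lam := by
      have := aux_rpow hlam hu.le
      rw [Real.exp_neg]
      rw [← div_le_iff₀ (Real.exp_pos _)] at this
      calc u ^ lam * (Real.exp (u / 2))⁻¹ = u ^ lam / Real.exp (u / 2) :=
            (div_eq_mul_inv _ _).symm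
      _ ≤ (2 * lam) ^ lam := this
    calc |t * ξ ^ 2| ^ lam * Real.exp (η * (|ξ| - ξ ^ 2) * t)
        ≤ η ^ (-lam) * u ^ lam * Real.exp (-(u / 2)) := by
          rw [h1]
          exact mul_le_mul_of_nonneg_left h2 (by positivity)
    _ = η ^ (-lam) * (u ^ lam * Real.exp (-(u / 2))) := by ring
    _ ≤ η ^ (-lam) * (2 * lam) ^ lam := mul_le_mul_of_nonneg_left key hetalam
    _ ≤ ((4:ℝ) ^ lam + (2 * lam) ^ lam) * (t ^ lam + η ^ (-lam)) * Real.exp E := by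
          have h4 : (0:ℝ) < (4:ℝ) ^ lam := by positivity
          have h2l : (0:ℝ) ≤ (2 * lam) ^ lam := by positivity
          have hexp : (1:ℝ) ≤ Real.exp E := Real.one_le_exp hE0
          nlinarith [mul_nonneg (mul_nonneg (by positivity : (0:ℝ) ≤ (4:ℝ) ^ lam + (2*lam)^lam) (by positivity : (0:ℝ) ≤ t ^ lam + η ^ (-lam))) (by linarith : (0:ℝ) ≤ Real.exp E - 1)]
end

section
/- Let β, η > 0 and define σ(ξ, ξ₁) = iβ(|ξ−ξ₁|(ξ−ξ₁) − |ξ|ξ + |ξ₁|ξ₁) − η((ξ−ξ₁)² − |ξ−ξ₁| − ξ² + |ξ| + ξ₁² − |ξ₁|). Fix 0 < ε ≪ 1, set γ = εN and I_N = [N, N+2γ]. Then for all N sufficiently large, for all ξ ∈ [N+3γ, N+4γ] and all (ξ₁, ξ₂) with ξ₁ ∈ I_N, ξ₂ − ξ₁ ∈ I_N, ξ − ξ₂ ∈ −I_N, one has |σ(ξ₂, ξ₁)| ∼ (β + η) N², i.e. c(β+η)N² ≤ |σ(ξ₂,ξ₁)| ≤ C(β+η)N² for absolute constants 0 < c ≤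 C (depending on ε). -/
/-- The resonance function of the Chen-Lee equation. -/
noncomputable def sigmaCL (β η ξ ξ₁ : ℝ) : ℂ :=
  Complex.I * (β : ℂ) * (((|ξ - ξ₁| * (ξ - ξ₁) - |ξ| * ξ + |ξ₁| * ξ₁ : ℝ)) : ℂ) -
    (((η * ((ξ - ξ₁) ^ 2 - |ξ - ξ₁| - ξ ^ 2 + |ξ| + ξ₁ ^ 2 - |ξ₁|) : ℝ)) : ℂ)

/-!
When all three frequencies `ξ₁`, `ξ - ξ₁`, `ξ` are nonnegative the absolute values disappear and
both the dispersive and the dissipative parts of `σ(ξ, ξ₁)` reduce to multiples of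
`ξ² - ξ₁² - (ξ - ξ₁)² = 2 ξ₁ (ξ - ξ₁)`, so `σ(ξ, ξ₁) = 2 ξ₁ (ξ - ξ₁) (η - iβ)`.
On the region of the theorem both `ξ₁` and `ξ₂ - ξ₁` lie in `[N, 3N]`, and
`(β + η) / 2 ≤ |η - iβ| ≤ β + η`.
-/

open Complex

theorem sigmaCL_eq_of_nonneg (β η : ℝ) {ξ ξ₁ : ℝ} (h₁ : 0 ≤ ξ₁) (h₂ : 0 ≤ ξ - ξ₁) :
    sigmaCL β η ξ ξ₁ = ((2 * ξ₁ * (ξ - ξ₁) : ℝ) : ℂ) * (η - β * I) := by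
  have h : 0 ≤ ξ := by linarith
  unfold sigmaCL
  rw [abs_of_nonneg h₁, abs_of_nonneg h₂, abs_of_nonneg h]
  push_cast
  ring

theorem norm_sigmaCL_of_nonneg (β η : ℝ) {ξ ξ₁ : ℝ} (h₁ : 0 ≤ ξ₁) (h₂ : 0 ≤ ξ - ξ₁) :
    ‖sigmaCL β η ξ ξ₁‖ = 2 * ξ₁ * (ξ - ξ₁) * ‖(η : ℂ) - β * I‖ := by
  rw [sigmaCL_eq_of_nonneg β η h₁ h₂, norm_mul, norm_real, Real.norm_of_nonneg (by positivity)]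

theorem norm_ofReal_sub_mul_I_le {β η : ℝ} (hβ : 0 ≤ β) (hη : 0 ≤ η) :
    ‖(η : ℂ) - β * I‖ ≤ β + η :=
  calc ‖(η : ℂ) - β * I‖ ≤ ‖(η : ℂ)‖ + ‖(β : ℂ) * I‖ := norm_sub_le _ _
    _ = β + η := by simp [abs_of_nonneg hβ, abs_of_nonneg hη, add_comm]

theorem half_add_le_norm_ofReal_sub_mul_I (β η : ℝ) :
    (|β| + |η|) / 2 ≤ ‖(η : ℂ) - β * I‖ := by
  have hre := abs_re_le_norm ((η : ℂ) - β * I)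
  have him := abs_im_le_norm ((η : ℂ) - β * I)
  simp only [sub_re, ofReal_re, mul_re, I_re, mul_zero, ofReal_im, I_im, mul_one, sub_zero,
    sub_im, mul_im, add_zero, zero_sub, abs_neg] at hre him
  linarith

theorem sq_le_mul_le_nine_mul_sq {N a b : ℝ} (ha : a ∈ Set.Icc N (3 * N))
    (hb : b ∈ Set.Icc N (3 * N)) (hN : 0 ≤ N) :
    N ^ 2 ≤ a * b ∧ a * b ≤ 9 * N ^ 2 := by
  obtain ⟨ha₁, ha₂⟩ := ha
  obtain ⟨hb₁, hb₂⟩ := hb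
  constructor <;> nlinarith

theorem Icc_add_two_mul_subset {ε N : ℝ} (hε : ε ≤ 1) (hN : 0 ≤ N) :
    Set.Icc N (N + 2 * (ε * N)) ⊆ Set.Icc N (3 * N) :=
  Set.Icc_subset_Icc_right (by nlinarith)

/-- On the frequency region K_ξ¹ one has |σ(ξ₂, ξ₁)| ∼ (β + η) N². -/
theorem stmt12 (β η : ℝ) (hβ : 0 < β) (hη : 0 < η) :
    ∃ ε₀ : ℝ, 0 < ε₀ ∧ ∀ ε : ℝ, 0 < ε → ε < ε₀ →
      ∃ c C : ℝ, 0 < c ∧ c ≤ C ∧ ∃ N₀ : ℝ, ∀ N ≥ N₀,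
        ∀ ξ ∈ Set.Icc (N + 3 * (ε * N)) (N + 4 * (ε * N)),
        ∀ ξ₁ ξ₂ : ℝ, ξ₁ ∈ Set.Icc N (N + 2 * (ε * N)) →
          ξ₂ - ξ₁ ∈ Set.Icc N (N + 2 * (ε * N)) →
          ξ₂ - ξ ∈ Set.Icc N (N + 2 * (ε * N)) →
          c * (β + η) * N ^ 2 ≤ ‖sigmaCL β η ξ₂ ξ₁‖ ∧
            ‖sigmaCL β η ξ₂ ξ₁‖ ≤ C * (β + η) * N ^ 2 := by
  refine ⟨1, one_pos, fun ε _ hε => ⟨1, 18, one_pos, by norm_num, 0,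
    fun N hN _ _ ξ₁ ξ₂ h₁ h₂ _ => ?_⟩⟩
  have hI := Icc_add_two_mul_subset hε.le hN
  obtain ⟨hlow, hupp⟩ := sq_le_mul_le_nine_mul_sq (hI h₁) (hI h₂) hN
  have hw₁ := half_add_le_norm_ofReal_sub_mul_I β η
  have hw₂ := norm_ofReal_sub_mul_I_le hβ.le hη.le
  rw [abs_of_pos hβ, abs_of_pos hη] at hw₁
  rw [norm_sigmaCL_of_nonneg β η (hN.trans h₁.1) (hN.trans h₂.1)]
  constructor <;> nlinarith
end

section
/- Let η > 0 and define λ(ξ, ξ₁) = −η((ξ−ξ₁)² − |ξ−ξ₁| − ξ² + |ξ| + ξ₁² − |ξ₁|). Fix 0 < ε < 1, N ≥ 2, γ = N^{1−ε}, and I_N = [N, N+2γ]. Then for all ξ ∈ [2N, 2N+4γ] and all ξ₁ with ξ₁ ∈ I_N and ξ − ξ₁ ∈ I_N, one has λ(ξ, ξ₁) ∼ η N²: there exist absolute constants 0 < c ≤ C such that cηN² ≤ λ(ξ,ξ₁) ≤ CηN². -/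
/-- The dissipative resonance function of the non-dispersive Chen-Lee equation. -/
noncomputable def lamCL (η ξ ξ₁ : ℝ) : ℝ :=
  -(η * ((ξ - ξ₁) ^ 2 - |ξ - ξ₁| - ξ ^ 2 + |ξ| + ξ₁ ^ 2 - |ξ₁|))

/-- For ξ ∈ [2N, 2N+4γ], ξ₁ ∈ I_N, ξ − ξ₁ ∈ I_N with γ = N^{1−ε}: λ(ξ,ξ₁) ∼ ηN². -/
theorem stmt13 :
    ∃ c C : ℝ, 0 < c ∧ c ≤ C ∧ ∀ (η ε N : ℝ), 0 < η → 0 < ε → ε < 1 → 2 ≤ N →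
      ∀ ξ ∈ Set.Icc (2 * N) (2 * N + 4 * N ^ (1 - ε)),
      ∀ ξ₁ ∈ Set.Icc N (N + 2 * N ^ (1 - ε)),
        ξ - ξ₁ ∈ Set.Icc N (N + 2 * N ^ (1 - ε)) →
        c * η * N ^ 2 ≤ lamCL η ξ ξ₁ ∧ lamCL η ξ ξ₁ ≤ C * η * N ^ 2 := by
  refine ⟨2, 18, by norm_num, by norm_num, ?_⟩
  intro η ε N hη hε hε1 hN ξ hξ ξ₁ hξ₁ hξξ₁
  obtain ⟨hξl, hξu⟩ := hξ
  obtain ⟨h1l, h1u⟩ := hξ₁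
  obtain ⟨h2l, h2u⟩ := hξξ₁
  have hN0 : (0 : ℝ) < N := by linarith
  have hg : N ^ (1 - ε) ≤ N := by
    calc N ^ (1 - ε) ≤ N ^ (1 : ℝ) :=
          Real.rpow_le_rpow_of_exponent_le (by linarith) (by linarith)
    _ = N := Real.rpow_one N
  have hξpos : 0 < ξ := by linarith
  have h1pos : 0 < ξ₁ := by linarith
  have h2pos : 0 < ξ - ξ₁ := by linarith
  unfold lamCL
  rw [abs_of_pos hξpos, abs_of_pos h1pos, abs_of_pos h2pos]
  have key : -(η * ((ξ - ξ₁) ^ 2 - (ξ - ξ₁) - ξ ^ 2 + ξ + ξ₁ ^ 2 - ξ₁))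
      = 2 * η * (ξ₁ * (ξ - ξ₁)) := by ring
  rw [key]
  constructor
  · have : N * N ≤ ξ₁ * (ξ - ξ₁) := mul_le_mul h1l h2l (le_of_lt hN0) (le_of_lt h1pos)
    nlinarith
  · have h1u' : ξ₁ ≤ 3 * N := by linarith
    have h2u' : ξ - ξ₁ ≤ 3 * N := by linarith
    have : ξ₁ * (ξ - ξ₁) ≤ (3 * N) * (3 * N) :=
      mul_le_mul h1u' h2u' (le_of_lt h2pos) (by linarith)
    nlinarith
end
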